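/- Let θ ∈ W^{1,4}([0,l]) with E(θ) < ∞, and let t₀ be a singular point of θ (i.e., θ(t₀) ∈ π/2 + πℤ) with τ(t₀) ≠ 0. Then t₀ is isolated: there exists ε > 0 such that (t₀ − ε, t₀ + ε) ∩ [0,l] contains no singular point of θ other than t₀. -/

import Mathlib

open MeasureTheory Set Real
open scoped ENNReal

/-- The bending energy `E(θ)`. -/
noncomputable def bendingEnergy (l : ℝ) (κ τ θ θ' : ℝ → ℝ) : ℝ≥0∞ :=
  ∫⁻ t in Icc (0:ℝ) l,
    ENNReal.ofReal ((κ t ^ 2 * cos (θ t) ^ 2 + (θ' t + τ t) ^ 2) ^ 2) /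
      ENNReal.ofReal (κ t ^ 2 * cos (θ t) ^ 2)

open scoped Interval

/-!
If `t` is a second singular point close to `t₀`, then `θ t = θ t₀`, so `∫ θ' = 0` over `[t₀, t]`
and `∫ τ = ∫ (θ' + τ)` there. With `d = |t - t₀|`, the left side is at least `|τ t₀| d / 2`
since `τ` keeps its sign near `t₀`. On the other hand `θ' ∈ L⁴` makes `θ` Hölder continuous of
exponent `3/4`, and `cos` vanishes at `θ t₀`, so `κ² cos² θ = O(d^{3/2})` on `[t₀, t]`. The
energy then bounds `∫ (θ' + τ)⁴` by `O(d^{3/2}) E(θ)`, and Hölder's inequality gives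
`|∫ (θ' + τ)| = O(d^{9/8})`. Hence `|τ t₀|⁸ = O(d)`, which fails for small `d`.
-/

lemma lintegral_enorm_pow_four_le {α E : Type*} [MeasurableSpace α] [NormedAddCommGroup E]
    {μ : Measure α} {f : α → E} (hf : AEStronglyMeasurable f μ) :
    (∫⁻ x, ‖f x‖ₑ ∂μ) ^ 4 ≤ (∫⁻ x, ‖f x‖ₑ ^ 4 ∂μ) * μ univ ^ 3 := by
  have h := eLpNorm_le_eLpNorm_mul_rpow_measure_univ (p := 1) (q := 4) (by norm_num) hf
  rw [eLpNorm_one_eq_lintegral_enorm,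
    eLpNorm_eq_lintegral_rpow_enorm_toReal (by norm_num) (by norm_num)] at h
  calc (∫⁻ x, ‖f x‖ₑ ∂μ) ^ 4
      ≤ ((∫⁻ x, ‖f x‖ₑ ^ (4:ℝ) ∂μ) ^ (1 / 4 : ℝ) * μ univ ^ (3 / 4 : ℝ)) ^ 4 := by
        norm_num at h ⊢; gcongr
    _ = (∫⁻ x, ‖f x‖ₑ ^ 4 ∂μ) * μ univ ^ 3 := by
        rw [mul_pow, ← ENNReal.rpow_natCast, ← ENNReal.rpow_natCast (_ ^ _), ← ENNReal.rpow_mul,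
          ← ENNReal.rpow_mul]
        norm_num

lemma abs_intervalIntegral_pow_four_le {f : ℝ → ℝ} {a b K : ℝ}
    (hf : AEStronglyMeasurable f (volume.restrict (Ι a b))) (hK0 : 0 ≤ K)
    (hK : ∫⁻ x in Ι a b, ‖f x‖ₑ ^ 4 ≤ ENNReal.ofReal K) :
    |∫ x in a..b, f x| ^ 4 ≤ K * |b - a| ^ 3 := by
  have hnorm : ‖∫ x in a..b, f x‖ₑ ≤ ∫⁻ x in Ι a b, ‖f x‖ₑ := by
    rw [← enorm_norm, intervalIntegral.norm_integral_eq_norm_integral_uIoc, enorm_norm]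
    exact enorm_integral_le_lintegral_enorm _
  have h := (pow_le_pow_left' hnorm 4).trans (lintegral_enorm_pow_four_le hf)
  rw [Measure.restrict_apply_univ, Real.volume_uIoc] at h
  rw [← ENNReal.ofReal_le_ofReal_iff (by positivity), ENNReal.ofReal_mul hK0,
    ENNReal.ofReal_pow (abs_nonneg _), ENNReal.ofReal_pow (abs_nonneg _),
    ← Real.enorm_eq_ofReal_abs]
  exact h.trans (by gcongr)

lemma sub_mul_abs_le_abs_intervalIntegral {f : ℝ → ℝ} {a b c r : ℝ}
    (hf : IntervalIntegrable f volume a b) (h : ∀ x ∈ Ι a b, |f x - c| ≤ r) :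
    (|c| - r) * |b - a| ≤ |∫ x in a..b, f x| := by
  have hdev : ‖∫ x in a..b, (f x - c)‖ ≤ r * |b - a| :=
    intervalIntegral.norm_integral_le_of_norm_le_const h
  rw [intervalIntegral.integral_sub hf intervalIntegrable_const, intervalIntegral.integral_const,
    smul_eq_mul, Real.norm_eq_abs] at hdev
  calc (|c| - r) * |b - a| ≤ |(b - a) * c| - |(∫ x in a..b, f x) - (b - a) * c| := by
        rw [abs_mul, sub_mul, mul_comm |c|]; linarith
    _ ≤ |∫ x in a..b, f x| := by
        linarith [abs_sub_abs_le_abs_sub ((b - a) * c) (∫ x in a..b, f x),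
          abs_sub_comm ((b - a) * c) (∫ x in a..b, f x)]

section Primitive

variable {f f' : ℝ → ℝ} {a b : ℝ}

lemma sub_eq_intervalIntegral_of_eq_add_integral
    (hrep : ∀ x ∈ Icc a b, f x = f a + ∫ t in a..x, f' t) (hf' : IntegrableOn f' (Icc a b))
    {x y : ℝ} (hx : x ∈ Icc a b) (hy : y ∈ Icc a b) :
    f x - f y = ∫ t in y..x, f' t := by
  have ha : a ∈ Icc a b := ⟨le_rfl, hx.1.trans hx.2⟩
  have hint : ∀ z ∈ Icc a b, IntervalIntegrable f' volume a z := fun z hz =>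
    (hf'.mono_set (uIcc_subset_Icc ha hz)).intervalIntegrable
  rw [hrep x hx, hrep y hy, ← intervalIntegral.integral_interval_sub_left (hint x hx) (hint y hy)]
  ring

lemma continuousOn_of_eq_add_integral
    (hrep : ∀ x ∈ Icc a b, f x = f a + ∫ t in a..x, f' t) (hf' : IntegrableOn f' (Icc a b)) :
    ContinuousOn f (Icc a b) := by
  rcases le_or_gt a b with hab | hab
  · refine (continuousOn_const.add ?_).congr hrep
    rw [← uIcc_of_le hab] at hf' ⊢
    exact intervalIntegral.continuousOn_primitive_interval hf'
  · simp [Icc_eq_empty_of_lt hab]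

lemma exists_pos_abs_sub_pow_four_le_of_memLp
    (hrep : ∀ x ∈ Icc a b, f x = f a + ∫ t in a..x, f' t)
    (hf' : MemLp f' 4 (volume.restrict (Icc a b))) :
    ∃ K > 0, ∀ x ∈ Icc a b, ∀ y ∈ Icc a b, |f x - f y| ^ 4 ≤ K * |x - y| ^ 3 := by
  set I := ∫⁻ t in Icc a b, ‖f' t‖ₑ ^ 4
  have hI : I ≠ ∞ := by
    have := lintegral_rpow_enorm_lt_top_of_eLpNorm_lt_top (by norm_num) (by norm_num) hf'.2
    simpa using this.ne
  refine ⟨I.toReal + 1, by positivity, fun x hx y hy => ?_⟩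
  have hsub : Ι y x ⊆ Icc a b := uIoc_subset_uIcc.trans (uIcc_subset_Icc hy hx)
  rw [sub_eq_intervalIntegral_of_eq_add_integral hrep (hf'.integrable (by norm_num)) hx hy]
  refine abs_intervalIntegral_pow_four_le (hf'.1.mono_measure (Measure.restrict_mono hsub le_rfl))
    (by positivity) ?_
  calc ∫⁻ t in Ι y x, ‖f' t‖ₑ ^ 4 ≤ I := lintegral_mono_set hsub
    _ ≤ ENNReal.ofReal (I.toReal + 1) := by
        rw [ENNReal.ofReal_add ENNReal.toReal_nonneg zero_le_one, ENNReal.ofReal_toReal hI]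
        exact le_self_add

end Primitive

lemma exists_pos_forall_sq_le_of_continuousOn {α : Type*} [TopologicalSpace α] {f : α → ℝ}
    {s : Set α} (hs : IsCompact s) (hf : ContinuousOn f s) : ∃ A > 0, ∀ x ∈ s, f x ^ 2 ≤ A := by
  obtain ⟨C, hC⟩ := hs.exists_bound_of_continuousOn hf
  refine ⟨C ^ 2 + 1, by positivity, fun x hx => ?_⟩
  nlinarith [abs_le.mp ((Real.norm_eq_abs _).symm.trans_le (hC x hx))]

lemma enorm_pow_four_le_mul_div {a b C : ℝ} (ha : 0 ≤ a) (haC : a ≤ C) (hC : 0 < C) :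
    ‖b‖ₑ ^ 4 ≤ ENNReal.ofReal C * (ENNReal.ofReal ((a + b ^ 2) ^ 2) / ENNReal.ofReal a) := by
  have hb : ‖b‖ₑ ^ 4 = ENNReal.ofReal ((b ^ 2) ^ 2) := by
    rw [Real.enorm_eq_ofReal_abs, ← ENNReal.ofReal_pow (abs_nonneg b), ← pow_mul, pow_abs,
      abs_of_nonneg (by positivity)]
  rw [hb]
  rcases ha.eq_or_lt with rfl | ha
  · rcases eq_or_ne b 0 with rfl | hb0
    · simp
    · rw [ENNReal.ofReal_zero, ENNReal.div_zero (by simp; positivity),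
        ENNReal.mul_top (by simpa using hC)]
      exact le_top
  · rw [← ENNReal.ofReal_div_of_pos ha, ← ENNReal.ofReal_mul hC.le]
    refine ENNReal.ofReal_le_ofReal ?_
    rw [mul_div_assoc', le_div_iff₀ ha]
    have := mul_le_mul (pow_le_pow_left₀ (by positivity) (le_add_of_nonneg_left ha.le) 2) haC
      ha.le (by positivity)
    nlinarith [sq_nonneg (a + b ^ 2)]

lemma lintegral_enorm_add_pow_four_le_bendingEnergy {l C : ℝ} {κ τ θ θ' : ℝ → ℝ} {s : Set ℝ}
    (hs : MeasurableSet s) (hsl : s ⊆ Icc 0 l) (hC : 0 < C)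
    (hκθ : ∀ x ∈ s, κ x ^ 2 * cos (θ x) ^ 2 ≤ C) :
    ∫⁻ x in s, ‖θ' x + τ x‖ₑ ^ 4 ≤ ENNReal.ofReal C * bendingEnergy l κ τ θ θ' := by
  calc ∫⁻ x in s, ‖θ' x + τ x‖ₑ ^ 4
      ≤ ∫⁻ x in s, ENNReal.ofReal C *
          (ENNReal.ofReal ((κ x ^ 2 * cos (θ x) ^ 2 + (θ' x + τ x) ^ 2) ^ 2) /
            ENNReal.ofReal (κ x ^ 2 * cos (θ x) ^ 2)) :=
        setLIntegral_mono' hs fun x hx => enorm_pow_four_le_mul_div (by positivity) (hκθ x hx) hC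
    _ ≤ ENNReal.ofReal C * bendingEnergy l κ τ θ θ' := by
        rw [lintegral_const_mul' _ _ ENNReal.ofReal_ne_top]
        gcongr; exact lintegral_mono_set hsl

lemma abs_cos_le_abs_sub {u v : ℝ} (hv : cos v = 0) : |cos u| ≤ |u - v| := by
  have h : cos u = -(sin (u - v) * sin v) := by
    conv_lhs => rw [show u = u - v + v by ring]
    rw [cos_add, hv, mul_zero, zero_sub]
  rw [h, abs_neg, abs_mul]
  exact (mul_le_of_le_one_right (abs_nonneg _) (abs_sin_le_one v)).trans abs_sin_le_abs

lemma eq_of_abs_sub_lt_pi {u v : ℝ} {j k : ℤ} (hu : u = π / 2 + j * π) (hv : v = π / 2 + k * π)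
    (huv : |u - v| < π) : u = v := by
  have hjk : |((j - k : ℤ) : ℝ)| < 1 := by
    rw [hu, hv, show π / 2 + j * π - (π / 2 + k * π) = ((j - k : ℤ) : ℝ) * π by push_cast; ring,
      abs_mul, abs_of_pos pi_pos] at huv
    exact (mul_lt_iff_lt_one_left pi_pos).mp huv
  have : j = k := by
    rw [← Int.cast_abs, ← Int.cast_one, Int.cast_lt, Int.abs_lt_one_iff, sub_eq_zero] at hjk
    exact hjk
  rw [hu, hv, this]

lemma pow_eight_le_of_intervalIntegral_eq_zero {l A K t₀ t : ℝ} {κ τ θ θ' : ℝ → ℝ}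
    (hsub : Ι t₀ t ⊆ Icc 0 l) (ht : t ≠ t₀)
    (hθ' : IntervalIntegrable θ' volume t₀ t) (hτ : IntervalIntegrable τ volume t₀ t)
    (hθ'0 : ∫ x in t₀..t, θ' x = 0) (hτt : ∀ x ∈ Ι t₀ t, |τ x - τ t₀| ≤ |τ t₀| / 2)
    (hA : 0 < A) (hκ : ∀ x ∈ Ι t₀ t, κ x ^ 2 ≤ A)
    (hK : 0 < K) (hθ : ∀ x ∈ Ι t₀ t, |θ x - θ t₀| ^ 4 ≤ K * |x - t₀| ^ 3)
    (hcos : cos (θ t₀) = 0) (hfin : bendingEnergy l κ τ θ θ' ≠ ∞) :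
    (|τ t₀| / 2) ^ 8 ≤ A ^ 2 * K * (bendingEnergy l κ τ θ θ').toReal ^ 2 * |t - t₀| := by
  set d := |t - t₀|
  set E := (bendingEnergy l κ τ θ θ').toReal
  set m := |τ t₀| / 2 with hm
  set s := √(K * d ^ 3)
  have hd : 0 < d := abs_sub_pos.mpr ht
  have hs : s ^ 2 = K * d ^ 3 := sq_sqrt (by positivity)
  have hκθ : ∀ x ∈ Ι t₀ t, κ x ^ 2 * cos (θ x) ^ 2 ≤ A * s := by
    intro x hx
    have hxd : |x - t₀| ≤ d := abs_sub_left_of_mem_uIcc (uIoc_subset_uIcc hx)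
    have hcos_sq : cos (θ x) ^ 2 ≤ s := by
      refine le_sqrt_of_sq_le ?_
      calc (cos (θ x) ^ 2) ^ 2 = |cos (θ x)| ^ 4 := by
            rw [← pow_mul, pow_abs, abs_of_nonneg (by positivity)]
        _ ≤ |θ x - θ t₀| ^ 4 := pow_le_pow_left₀ (abs_nonneg _) (abs_cos_le_abs_sub hcos) 4
        _ ≤ K * d ^ 3 := (hθ x hx).trans (by gcongr)
    exact mul_le_mul (hκ x hx) hcos_sq (sq_nonneg _) hA.le
  have hupper : |∫ x in t₀..t, (θ' x + τ x)| ^ 4 ≤ A * s * E * d ^ 3 := by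
    refine abs_intervalIntegral_pow_four_le (hθ'.add hτ).def'.aestronglyMeasurable
      (by positivity) ?_
    rw [ENNReal.ofReal_mul (by positivity), ENNReal.ofReal_toReal hfin]
    exact lintegral_enorm_add_pow_four_le_bendingEnergy measurableSet_uIoc hsub
      (by positivity) hκθ
  have hlower : m * d ≤ |∫ x in t₀..t, (θ' x + τ x)| := by
    rw [intervalIntegral.integral_add hθ' hτ, hθ'0, zero_add]
    calc m * d = (|τ t₀| - m) * d := by rw [hm]; ring
      _ ≤ |∫ x in t₀..t, τ x| := sub_mul_abs_le_abs_intervalIntegral hτ hτt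
  have h4 : m ^ 4 * d ≤ A * s * E := by
    refine le_of_mul_le_mul_right ?_ (pow_pos hd 3)
    calc m ^ 4 * d * d ^ 3 = (m * d) ^ 4 := by ring
      _ ≤ A * s * E * d ^ 3 := (pow_le_pow_left₀ (by positivity) hlower 4).trans hupper
  have h8 : m ^ 8 * d ^ 2 ≤ A ^ 2 * K * E ^ 2 * d * d ^ 2 := by
    calc m ^ 8 * d ^ 2 = (m ^ 4 * d) ^ 2 := by ring
      _ ≤ (A * s * E) ^ 2 := pow_le_pow_left₀ (by positivity) h4 2
      _ = A ^ 2 * K * E ^ 2 * d * d ^ 2 := by rw [mul_pow, mul_pow, hs]; ring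
  exact le_of_mul_le_mul_right h8 (by positivity)

theorem singular_points_isolated_general (l : ℝ) (κ τ θ θ' : ℝ → ℝ)
    (hκ : ContinuousOn κ (Icc 0 l))
    (hτ : ContinuousOn τ (Icc 0 l))
    (hrep : ∀ x ∈ Icc (0:ℝ) l, θ x = θ 0 + ∫ t in (0:ℝ)..x, θ' t)
    (hLp : MemLp θ' 4 (volume.restrict (Icc (0:ℝ) l)))
    (hfin : bendingEnergy l κ τ θ θ' ≠ ∞)
    (t₀ : ℝ) (ht₀ : t₀ ∈ Icc (0:ℝ) l)
    (hsing : ∃ k : ℤ, θ t₀ = π / 2 + k * π) (hτ0 : τ t₀ ≠ 0) :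
    ∃ ε > 0, ∀ t ∈ Ioo (t₀ - ε) (t₀ + ε) ∩ Icc (0:ℝ) l,
      t ≠ t₀ → ¬∃ k : ℤ, θ t = π / 2 + k * π := by
  obtain ⟨k₀, hk₀⟩ := hsing
  have hθ' : IntegrableOn θ' (Icc 0 l) := hLp.integrable (by norm_num)
  obtain ⟨K, hK, hθK⟩ := exists_pos_abs_sub_pow_four_le_of_memLp hrep hLp
  obtain ⟨A, hA, hκA⟩ := exists_pos_forall_sq_le_of_continuousOn isCompact_Icc hκ
  set m := |τ t₀| / 2
  set N := A ^ 2 * K * (bendingEnergy l κ τ θ θ').toReal ^ 2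
  have hm : 0 < m := by have := abs_pos.mpr hτ0; positivity
  obtain ⟨δτ, hδτ, hτδ⟩ := Metric.continuousWithinAt_iff.mp (hτ t₀ ht₀) m hm
  obtain ⟨δθ, hδθ, hθδ⟩ := Metric.continuousWithinAt_iff.mp
    (continuousOn_of_eq_add_integral hrep hθ' t₀ ht₀) π pi_pos
  refine ⟨min (min δτ δθ) (m ^ 8 / (N + 1)), by positivity, ?_⟩
  rintro t ⟨htε, ht⟩ hne ⟨k, hk⟩
  rw [← Real.ball_eq_Ioo, Metric.mem_ball, lt_min_iff, lt_min_iff, lt_div_iff₀ (by positivity)]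
    at htε
  have hsub : Ι t₀ t ⊆ Icc 0 l := uIoc_subset_uIcc.trans (uIcc_subset_Icc ht₀ ht)
  have heq : θ t = θ t₀ := eq_of_abs_sub_lt_pi hk hk₀ (hθδ ht htε.1.2)
  have hθ'0 : ∫ x in t₀..t, θ' x = 0 := by
    rw [← sub_eq_intervalIntegral_of_eq_add_integral hrep hθ' ht ht₀, heq, sub_self]
  have hτt : ∀ x ∈ Ι t₀ t, |τ x - τ t₀| ≤ m := fun x hx =>
    (hτδ (hsub hx) ((abs_sub_left_of_mem_uIcc (uIoc_subset_uIcc hx)).trans_lt htε.1.1)).le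
  have hcos : cos (θ t₀) = 0 := by rw [hk₀]; simp [cos_add, sin_int_mul_pi]
  have key : m ^ 8 ≤ N * |t - t₀| := pow_eight_le_of_intervalIntegral_eq_zero hsub hne
    (hθ'.mono_set (uIcc_subset_Icc ht₀ ht)).intervalIntegrable
    (hτ.mono (uIcc_subset_Icc ht₀ ht)).intervalIntegrable hθ'0 hτt hA
    (fun x hx => hκA x (hsub hx)) hK (fun x hx => hθK x (hsub hx) t₀ ht₀) hcos hfin
  rw [Real.dist_eq] at htε
  nlinarith [abs_nonneg (t - t₀)]

/-- Theorem 6.3: if `E(θ) < ∞` and `t₀` is a singular point of `θ` with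
`τ(t₀) ≠ 0`, then `t₀` is an isolated singular point. -/
theorem singular_points_isolated (l : ℝ) (hl : 0 < l) (κ τ θ θ' : ℝ → ℝ)
    (hκ : ContinuousOn κ (Icc 0 l)) (hκ0 : ∀ t ∈ Icc (0:ℝ) l, κ t ≠ 0)
    (hτ : ContinuousOn τ (Icc 0 l))
    (hrep : ∀ x ∈ Icc (0:ℝ) l, θ x = θ 0 + ∫ t in (0:ℝ)..x, θ' t)
    (hLp : MemLp θ' 4 (volume.restrict (Icc (0:ℝ) l)))
    (hfin : bendingEnergy l κ τ θ θ' ≠ ∞)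
    (t₀ : ℝ) (ht₀ : t₀ ∈ Icc (0:ℝ) l)
    (hsing : ∃ k : ℤ, θ t₀ = π / 2 + k * π) (hτ0 : τ t₀ ≠ 0) :
    ∃ ε > 0, ∀ t ∈ Ioo (t₀ - ε) (t₀ + ε) ∩ Icc (0:ℝ) l,
      t ≠ t₀ → ¬∃ k : ℤ, θ t = π / 2 + k * π :=
  singular_points_isolated_general l κ τ θ θ' hκ hτ hrep hLp hfin t₀ ht₀ hsing hτ0
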